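/- Let μ > 0, 0 < d < 1/2, and r ∈ ℝ. Consider the objective h(w, z) = (1/2)(w − r)² + μz + d(w²/z − w²) with the conventions 0²/0 = 0 and w²/0 = +∞ for w ≠ 0. Then the infimum of h over the constrained set {(w, z) ∈ ℝ × [0,1] : |w| ≥ √(2μ)z and |r − w| ≤ √(2μ)(1 − z)} equals the infimum of h over the unconstrained set ℝ × [0,1]; that is, the constraints |w| ≥ √(2μ)z and |r − w| ≤ √(2μ)(1 − z) are redundant, and both infima equal φ̄(r; d). -/

import Mathlib

/-- The perspective-relaxation loss φ̄(r; d) for parameters μ > 0, d ∈ (0,1/2). -/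
noncomputable def phiBar (mu d r : ℝ) : ℝ :=
  if |r| ≤ 2 * Real.sqrt (mu * d) then (1/2) * r^2
  else if |r| < Real.sqrt (mu / d) then
    (-(d * r^2) + 2 * Real.sqrt (mu * d) * |r| - 2 * mu * d) / (1 - 2*d)
  else mu

/-- The objective h(w,z) = (1/2)(w−r)² + μz + d(w²/z − w²), EReal-valued,
with the conventions h(0,0) = (1/2)r² and h(w,0) = +∞ for w ≠ 0. -/
noncomputable def hObj (mu d r w z : ℝ) : EReal :=
  if z = 0 then (if w = 0 then (((1/2) * (w - r)^2 : ℝ) : EReal) else ⊤)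
  else (((1/2) * (w - r)^2 + mu * z + d * (w^2 / z - w^2) : ℝ) : EReal)

open Real

/-! Write μ = d M². For z > 0, AM-GM gives μ z + d w² / z ≥ 2 d M |w|, so when |w| ≤ M the
objective is at least ½ (|w| - |r|)² + 2 d M |w| - d w², a convex quadratic in |w| bounded below
by φ̄ on [0, M]; when |w| > M the excess of h(w, z) over ½ (w - r)² + μ is
d (1 - z)(w² - M² z) / z ≥ 0, and φ̄ ≤ μ. Conversely, for r ≥ 0 (the case r < 0 follows by
symmetry) φ̄ is attained at (0, 0), at w = (r - 2 d M) / (1 - 2 d), z = w / M, or at (r, 1), in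
the three regimes of φ̄; these points satisfy both constraints because √(2μ) = √(2d) M and
√(2d) < 1. -/

def Feasible (c r w z : ℝ) : Prop :=
  0 ≤ z ∧ z ≤ 1 ∧ c * z ≤ |w| ∧ |r - w| ≤ c * (1 - z)

lemma Feasible.neg {c r w z : ℝ} (h : Feasible c r w z) : Feasible c (-r) (-w) z := by
  obtain ⟨hz0, hz1, h₁, h₂⟩ := h
  exact ⟨hz0, hz1, by rwa [abs_neg], by rwa [neg_sub_neg, abs_sub_comm]⟩

lemma phiBar_neg (mu d r : ℝ) : phiBar mu d (-r) = phiBar mu d r := by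
  simp only [phiBar, abs_neg, neg_sq]

lemma hObj_neg (mu d r w z : ℝ) : hObj mu d (-r) (-w) z = hObj mu d r w z := by
  simp only [hObj, neg_eq_zero, neg_sq, ← neg_add', ← sub_eq_add_neg]

lemma exists_pos_eq_mul_sq {mu d : ℝ} (hmu : 0 < mu) (hd : 0 < d) :
    ∃ M, 0 < M ∧ mu = d * M ^ 2 :=
  ⟨√(mu / d), by positivity, by rw [sq_sqrt (by positivity)]; field_simp⟩

section
variable {d M : ℝ} (r : ℝ)

lemma sqrt_two_mul_mul_sq (hd : 0 ≤ d) (hM : 0 ≤ M) : √(2 * (d * M ^ 2)) = √(2 * d) * M := by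
  rw [← mul_assoc, sqrt_mul (by positivity), sqrt_sq hM]

lemma phiBar_mul_sq (hd : 0 < d) (hM : 0 < M) :
    phiBar (d * M ^ 2) d r =
      if |r| ≤ 2 * (d * M) then 1 / 2 * r ^ 2
      else if |r| < M then (-(d * r ^ 2) + 2 * (d * M) * |r| - 2 * (d * M ^ 2) * d) / (1 - 2 * d)
      else d * M ^ 2 := by
  have h₁ : √(d * M ^ 2 * d) = d * M := by
    rw [show d * M ^ 2 * d = (d * M) ^ 2 by ring, sqrt_sq (by positivity)]
  have h₂ : √(d * M ^ 2 / d) = M := by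
    rw [mul_div_cancel_left₀ _ hd.ne', sqrt_sq hM.le]
  simp only [phiBar, h₁, h₂]

variable (hd0 : 0 < d) (hd : d < 1 / 2) (hM : 0 < M)
include hd0 hd hM

lemma phiBar_mul_sq_le_of_le {t : ℝ} (ht : 0 ≤ t) (htM : t ≤ M) :
    phiBar (d * M ^ 2) d r ≤ 1 / 2 * (t - |r|) ^ 2 + 2 * (d * M) * t - d * t ^ 2 := by
  have h12 : 0 < 1 - 2 * d := by linarith
  rw [phiBar_mul_sq r hd0 hM]
  split_ifs with h₁ h₂
  · nlinarith [sq_abs r]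
  · rw [div_le_iff₀ h12]
    nlinarith [sq_nonneg ((1 - 2 * d) * t - (|r| - 2 * (d * M))), sq_abs r]
  · have hrt : M - t ≤ |r| - t := by linarith [not_lt.1 h₂]
    nlinarith [mul_self_le_mul_self (sub_nonneg.2 htM) hrt, sq_nonneg (M - t)]

lemma phiBar_mul_sq_le : phiBar (d * M ^ 2) d r ≤ d * M ^ 2 := by
  have h12 : 0 < 1 - 2 * d := by linarith
  rw [phiBar_mul_sq r hd0 hM]
  split_ifs with h₁ h₂
  · have hr : r ^ 2 ≤ (2 * (d * M)) ^ 2 := by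
      rw [← sq_abs]; exact pow_le_pow_left₀ (abs_nonneg r) h₁ 2
    nlinarith [mul_pos h12 (mul_pos hd0 (pow_pos hM 2))]
  · rw [div_le_iff₀ h12]
    nlinarith [sq_nonneg (|r| - M), sq_abs r]
  · rfl

lemma phiBar_mul_sq_le_hObj {w z : ℝ} (hz0 : 0 ≤ z) (hz1 : z ≤ 1) :
    (phiBar (d * M ^ 2) d r : EReal) ≤ hObj (d * M ^ 2) d r w z := by
  rcases hz0.eq_or_lt with rfl | hz
  · by_cases hw : w = 0
    · have h := phiBar_mul_sq_le_of_le r hd0 hd hM le_rfl hM.le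
      simp only [hObj, hw, if_true, EReal.coe_le_coe_iff]
      simpa [sq_abs] using h
    · simp [hObj, hw]
  rw [hObj, if_neg hz.ne', EReal.coe_le_coe_iff]
  have hwr : (|w| - |r|) ^ 2 ≤ (w - r) ^ 2 :=
    sq_le_sq.2 (by simpa using abs_abs_sub_abs_le_abs_sub w r)
  rcases le_or_gt |w| M with hwM | hwM
  · have hamgm : d * M ^ 2 * z + d * (w ^ 2 / z) - 2 * (d * M) * |w|
        = d * (M * z - |w|) ^ 2 / z := by
      field_simp; rw [← sq_abs w]; ring
    have := phiBar_mul_sq_le_of_le r hd0 hd hM (abs_nonneg w) hwM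
    nlinarith [sq_abs w, div_nonneg (mul_nonneg hd0.le (sq_nonneg (M * z - |w|))) hz.le]
  · have hsplit : d * M ^ 2 * z + d * (w ^ 2 / z - w ^ 2) - d * M ^ 2
        = d * (1 - z) * (w ^ 2 - M ^ 2 * z) / z := by
      field_simp; ring
    have hwM2 : M ^ 2 * z ≤ w ^ 2 := calc
      M ^ 2 * z ≤ M ^ 2 := mul_le_of_le_one_right (sq_nonneg M) hz1
      _ ≤ w ^ 2 := by rw [← sq_abs w]; exact pow_le_pow_left₀ hM.le hwM.le 2
    have := phiBar_mul_sq_le r hd0 hd hM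
    have hexcess : 0 ≤ d * (1 - z) * (w ^ 2 - M ^ 2 * z) / z := by
      have := sub_nonneg.2 hz1; have := sub_nonneg.2 hwM2; positivity
    nlinarith

lemma exists_feasible_hObj_mul_sq_eq_of_lt_of_lt (h₁ : 2 * (d * M) < r) (h₂ : r < M) :
    ∃ w z, Feasible (√(2 * d) * M) r w z ∧ hObj (d * M ^ 2) d r w z = phiBar (d * M ^ 2) d r := by
  have h12 : 0 < 1 - 2 * d := by linarith
  set e := √(2 * d)
  have he2 : e ^ 2 = 2 * d := sq_sqrt (by positivity)
  have he0 : 0 < e := sqrt_pos.2 (by positivity)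
  have he1 : e < 1 := by nlinarith
  -- the minimiser of `½ (t - r)² + 2 d M t - d t²`, with `z = t / M` the AM-GM equality case
  set w := (r - 2 * (d * M)) / (1 - 2 * d) with hw_def
  have hw : w * (1 - 2 * d) = r - 2 * (d * M) := div_mul_cancel₀ _ h12.ne'
  have hw0 : 0 < w := div_pos (by linarith) h12
  have hwr : w ≤ r := by nlinarith
  refine ⟨w, w / M, ⟨by positivity, (div_le_one hM).2 (by nlinarith), ?_, ?_⟩, ?_⟩
  · rw [abs_of_pos hw0, mul_assoc, mul_div_cancel₀ _ hM.ne']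
    nlinarith
  · rw [abs_of_nonneg (by linarith), mul_one_sub, mul_assoc, mul_div_cancel₀ _ hM.ne']
    have key : (r - w - (e * M - e * w)) * (1 - 2 * d) = - (e * (1 - e) * (M - r)) := by
      linear_combination (e - 1) * hw + (r - M) * he2
    nlinarith [mul_pos (mul_pos he0 (sub_pos.2 he1)) (sub_pos.2 h₂)]
  · have hr : ¬ |r| ≤ 2 * (d * M) := by rw [abs_of_pos (by linarith)]; linarith
    have hrM : |r| < M := by rwa [abs_of_pos (by linarith)]
    rw [hObj, if_neg (by positivity), phiBar_mul_sq r hd0 hM, if_neg hr, if_pos hrM,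
      EReal.coe_eq_coe_iff, abs_of_pos (by linarith), hw_def]
    field_simp
    ring

lemma exists_feasible_hObj_mul_sq_eq_of_nonneg (hr : 0 ≤ r) :
    ∃ w z, Feasible (√(2 * d) * M) r w z ∧ hObj (d * M ^ 2) d r w z = phiBar (d * M ^ 2) d r := by
  have he2 : √(2 * d) ^ 2 = 2 * d := sq_sqrt (by positivity)
  have he1 : √(2 * d) < 1 := by nlinarith [sqrt_nonneg (2 * d)]
  rcases le_or_gt r (2 * (d * M)) with h₁ | h₁
  · refine ⟨0, 0, ⟨le_rfl, zero_le_one, by simp, ?_⟩, ?_⟩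
    · rw [sub_zero, abs_of_nonneg hr, sub_zero, mul_one]
      nlinarith [sqrt_nonneg (2 * d)]
    · rw [phiBar_mul_sq r hd0 hM, if_pos (by rwa [abs_of_nonneg hr])]
      simp [hObj]
  rcases lt_or_ge r M with h₂ | h₂
  · exact exists_feasible_hObj_mul_sq_eq_of_lt_of_lt r hd0 hd hM h₁ h₂
  · refine ⟨r, 1, ⟨zero_le_one, le_rfl, ?_, by simp⟩, ?_⟩
    · rw [mul_one, abs_of_nonneg hr]
      nlinarith
    · rw [phiBar_mul_sq r hd0 hM, abs_of_nonneg hr, if_neg (by linarith), if_neg (by linarith)]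
      simp [hObj]

end

lemma phiBar_le_hObj {mu d : ℝ} (r : ℝ) {w z : ℝ} (hmu : 0 < mu) (hd0 : 0 < d) (hd : d < 1 / 2)
    (hz0 : 0 ≤ z) (hz1 : z ≤ 1) : (phiBar mu d r : EReal) ≤ hObj mu d r w z := by
  obtain ⟨M, hM, rfl⟩ := exists_pos_eq_mul_sq hmu hd0
  exact phiBar_mul_sq_le_hObj r hd0 hd hM hz0 hz1

lemma exists_feasible_hObj_eq_phiBar {mu d : ℝ} (r : ℝ) (hmu : 0 < mu) (hd0 : 0 < d)
    (hd : d < 1 / 2) : ∃ w z, Feasible √(2 * mu) r w z ∧ hObj mu d r w z = phiBar mu d r := by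
  obtain ⟨M, hM, rfl⟩ := exists_pos_eq_mul_sq hmu hd0
  rw [sqrt_two_mul_mul_sq hd0.le hM.le]
  rcases le_total 0 r with hr | hr
  · exact exists_feasible_hObj_mul_sq_eq_of_nonneg r hd0 hd hM hr
  · obtain ⟨w, z, hfeas, hval⟩ :=
      exists_feasible_hObj_mul_sq_eq_of_nonneg (-r) hd0 hd hM (neg_nonneg.2 hr)
    refine ⟨-w, z, by simpa using hfeas.neg, ?_⟩
    rw [← hObj_neg, neg_neg, hval, phiBar_neg]

/-- the constraints |w| ≥ √(2μ)z and |r − w| ≤ √(2μ)(1 − z) are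
redundant: the constrained and unconstrained infima of h over ℝ × [0,1]
coincide, and both equal φ̄(r; d). -/
theorem stmt_7 (mu d r : ℝ) (hmu : 0 < mu) (hd0 : 0 < d) (hd : d < 1/2) :
    sInf {v : EReal | ∃ w z : ℝ, 0 ≤ z ∧ z ≤ 1 ∧
        Real.sqrt (2*mu) * z ≤ |w| ∧ |r - w| ≤ Real.sqrt (2*mu) * (1 - z) ∧
        v = hObj mu d r w z}
      = sInf {v : EReal | ∃ w z : ℝ, 0 ≤ z ∧ z ≤ 1 ∧ v = hObj mu d r w z}
    ∧ sInf {v : EReal | ∃ w z : ℝ, 0 ≤ z ∧ z ≤ 1 ∧ v = hObj mu d r w z}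
      = ((phiBar mu d r : ℝ) : EReal) := by
  set S := {v : EReal | ∃ w z : ℝ, 0 ≤ z ∧ z ≤ 1 ∧ v = hObj mu d r w z}
  set T := {v : EReal | ∃ w z : ℝ, 0 ≤ z ∧ z ≤ 1 ∧
    Real.sqrt (2*mu) * z ≤ |w| ∧ |r - w| ≤ Real.sqrt (2*mu) * (1 - z) ∧ v = hObj mu d r w z}
  have hTS : T ⊆ S := fun _ ⟨w, z, hz0, hz1, _, _, hv⟩ => ⟨w, z, hz0, hz1, hv⟩
  have hlower : (phiBar mu d r : EReal) ∈ lowerBounds S := by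
    rintro _ ⟨w, z, hz0, hz1, rfl⟩
    exact phiBar_le_hObj r hmu hd0 hd hz0 hz1
  obtain ⟨w, z, ⟨hz0, hz1, h₁, h₂⟩, hval⟩ := exists_feasible_hObj_eq_phiBar r hmu hd0 hd
  have hT : IsLeast T (phiBar mu d r) :=
    ⟨⟨w, z, hz0, hz1, h₁, h₂, hval.symm⟩, lowerBounds_mono_set hTS hlower⟩
  have hS : IsLeast S (phiBar mu d r) := ⟨hTS hT.1, hlower⟩
  rw [hT.isGLB.sInf_eq, hS.isGLB.sInf_eq]
  exact ⟨rfl, rfl⟩
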